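/- Let d ≥ 2 and let G = (V,E) be a finite simple graph with at least d+1 vertices. Then a(G, ℓ∞^d) ≤ a(G)/d, where a(G) is the algebraic connectivity (Fiedler number) of G. -/

import Mathlib

open scoped Classical
open Matrix

noncomputable section

/-- The list of eigenvalues (roots of the characteristic polynomial, with multiplicity)
of a real matrix, sorted in nondecreasing order. -/
def sortedEigs {m : Type*} [Fintype m] [DecidableEq m] (A : Matrix m m ℝ) : List ℝ :=
  A.charpoly.roots.sort (· ≤ ·)

/-- `eigval A j` is the `j`-th smallest eigenvalue `λ_j(A)` (1-based, with multiplicity). -/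
def eigval {m : Type*} [Fintype m] [DecidableEq m] (A : Matrix m m ℝ) (j : ℕ) : ℝ :=
  (sortedEigs A).getD (j - 1) 0

variable {V : Type*} [Fintype V] [DecidableEq V]

/-- `p` is an ℓ∞-framework position for `G` (i.e. `p ∈ W(G, ℓ∞^d)`): along each edge the
difference of the endpoints is nonzero and has a unique coordinate of maximal absolute
value. -/
def IsLinfPos {d : ℕ} (G : SimpleGraph V) (p : V → Fin d → ℝ) : Prop :=
  ∀ ⦃v w : V⦄, G.Adj v w → p v ≠ p w ∧
    ∃ i : Fin d, ∀ j : Fin d, j ≠ i → |p v j - p w j| < |p v i - p w i|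

/-- The `i`-th monochrome subgraph of the framework `(G, p)` in `ℓ∞^d`: the spanning
subgraph of `G` whose edges are those on which the `i`-th coordinate of the difference of
the endpoints has maximal absolute value. -/
def mono {d : ℕ} (G : SimpleGraph V) (p : V → Fin d → ℝ) (i : Fin d) : SimpleGraph V where
  Adj v w := G.Adj v w ∧ ∀ j : Fin d, |p v j - p w j| ≤ |p v i - p w i|
  symm := by
    constructor
    intro v w h
    refine ⟨h.1.symm, fun j => ?_⟩
    rw [abs_sub_comm (p w j), abs_sub_comm (p w i)]
    exact h.2 j
  loopless := ⟨fun v h => G.loopless.irrefl v h.1⟩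

/-- The rigidity matrix `R(G,p)` of a framework in `ℓ∞^d`, with rows indexed by edges and
columns indexed by vertex-coordinate pairs: the row of an edge `vw ∈ E_i` has entry
`sgn((p v − p w) i)` in column `(v, i)`, entry `−sgn((p v − p w) i) = sgn((p w − p v) i)`
in column `(w, i)`, and zeros elsewhere. -/
def rigidity {d : ℕ} (G : SimpleGraph V) (p : V → Fin d → ℝ) :
    Matrix G.edgeSet (V × Fin d) ℝ := fun e vi =>
  if h : vi.1 ∈ (e : Sym2 V) then
    if (mono G p vi.2).Adj vi.1 (Sym2.Mem.other h) then
      Real.sign (p vi.1 vi.2 - p (Sym2.Mem.other h) vi.2)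
    else 0
  else 0

/-- The framework Laplacian `L(G,p) = R(G,p)ᵀ R(G,p)` of a framework in `ℓ∞^d`. -/
def fLap {d : ℕ} (G : SimpleGraph V) (p : V → Fin d → ℝ) :
    Matrix (V × Fin d) (V × Fin d) ℝ :=
  (rigidity G p)ᵀ * rigidity G p

/-- The algebraic connectivity (Fiedler number) `a(H) = λ₂(L(H))` of a finite simple
graph. -/
def algConn (H : SimpleGraph V) : ℝ := eigval (H.lapMatrix ℝ) 2

/-- The algebraic connectivity of `G` in `ℓ∞^d`:
`a(G, ℓ∞^d) = sup { λ_{d+1}(L(G,p)) : p ∈ W(G, ℓ∞^d) }`. -/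
def algConnLinf (d : ℕ) (G : SimpleGraph V) : ℝ :=
  sSup {t : ℝ | ∃ p : V → Fin d → ℝ, IsLinfPos G p ∧ t = eigval (fLap G p) (d + 1)}

end


/-!
Take a Fiedler vector `f` of `G`: `f ⊥ 1`, `f ≠ 0` and `fᵀ L(G) f ≤ a(G) ‖f‖²`. In an
ℓ∞-framework every edge lies in exactly one monochrome subgraph, so on a displacement
`x (v, j) = c j + A f v` (a translation plus a uniform stretch along `f`) each edge contributes
`A² (f v - f w)²`, whence `xᵀ L(G,p) x = A² fᵀ L(G) f`. Since `f ⊥ 1`, the translation part is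
orthogonal to the stretch in every coordinate and `‖x‖² ≥ d A² ‖f‖²`. These displacements form a
`(d+1)`-dimensional space on which the Rayleigh quotient of `L(G,p)` is at most `a(G)/d`, so
Courant–Fischer gives `λ_{d+1}(L(G,p)) ≤ a(G)/d`.
-/

open Finset Module

namespace List

variable {α : Type*} [LinearOrder α] {l : List α}

theorem SortedLE.succ_le_countP_le_getElem (hl : l.SortedLE) {i : ℕ} (hi : i < l.length) :
    i + 1 ≤ l.countP (· ≤ l[i]) := by
  have htake : ∀ a ∈ l.take (i + 1), a ≤ l[i] := by
    intro a ha
    obtain ⟨j, hj, rfl⟩ := List.getElem_of_mem ha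
    rw [List.getElem_take]
    exact hl.getElem_le_getElem_of_le (by simp at hj; omega)
  refine le_trans (le_of_eq ?_) (List.take_sublist (i + 1) l).countP_le
  rw [List.countP_eq_length.mpr (by simpa using htake), List.length_take]
  omega

theorem SortedLE.getElem_le_of_lt_countP (hl : l.SortedLE) {i : ℕ} (hi : i < l.length) {c : α}
    (h : i < l.countP (· ≤ c)) : l[i] ≤ c := by
  by_contra! hc
  have hdrop : (l.drop i).countP (· ≤ c) = 0 := by
    refine List.countP_eq_zero.mpr fun a ha => ?_
    obtain ⟨j, hj, rfl⟩ := List.getElem_of_mem ha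
    rw [List.getElem_drop]
    simpa using hc.trans_le (hl.getElem_le_getElem_of_le (Nat.le_add_right i j))
  have htake : (l.take i).countP (· ≤ c) ≤ i :=
    List.countP_le_length.trans (List.length_take_le _ _)
  rw [← List.take_append_drop i l, List.countP_append, hdrop] at h
  omega

end List

theorem Submodule.exists_mem_ne_zero_forall_dotProduct_eq_zero {K n ι : Type*} [Field K]
    [Fintype n] [Fintype ι] (W : Submodule K (n → K)) (u : ι → n → K)
    (h : Fintype.card ι < finrank K W) : ∃ x ∈ W, x ≠ 0 ∧ ∀ i, u i ⬝ᵥ x = 0 := by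
  have hker : LinearMap.ker ((Matrix.of u).mulVecLin ∘ₗ W.subtype) ≠ ⊥ :=
    LinearMap.ker_ne_bot_of_finrank_lt (by rwa [finrank_fintype_fun_eq_card])
  obtain ⟨⟨x, hxW⟩, hx, hx0⟩ := Submodule.ne_bot_iff _ |>.mp hker
  refine ⟨x, hxW, fun h0 => hx0 (by simp [h0]), fun i => ?_⟩
  simpa [mulVec] using congrFun hx i

section Spectrum

variable {n : Type*} [Fintype n] [DecidableEq n] {M : Matrix n n ℝ}

theorem sortedLE_sortedEigs (M : Matrix n n ℝ) : (sortedEigs M).SortedLE :=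
  (Multiset.pairwise_sort _ _).sortedLE

namespace Matrix.IsHermitian

theorem coe_sortedEigs (hM : M.IsHermitian) :
    (sortedEigs M : Multiset ℝ) = univ.val.map hM.eigenvalues := by
  rw [sortedEigs, Multiset.sort_eq, hM.roots_charpoly_eq_eigenvalues, RCLike.ofReal_real_eq_id,
    Function.id_comp]

theorem countP_sortedEigs (hM : M.IsHermitian) (c : ℝ) :
    (sortedEigs M).countP (· ≤ c) = #{i | hM.eigenvalues i ≤ c} := by
  rw [← Multiset.coe_countP, coe_sortedEigs hM, Multiset.countP_map, Finset.card_def,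
    Finset.filter_val]

theorem eigval_le_of_le_card_filter (hM : M.IsHermitian) {k : ℕ} (hk : k ≠ 0) {c : ℝ}
    (h : k ≤ #{i | hM.eigenvalues i ≤ c}) : eigval M k ≤ c := by
  rw [← countP_sortedEigs hM] at h
  have hlen : k - 1 < (sortedEigs M).length := by
    have := h.trans List.countP_le_length
    omega
  rw [eigval, List.getD_eq_getElem _ _ hlen]
  exact (sortedLE_sortedEigs M).getElem_le_of_lt_countP hlen (by omega)

theorem le_card_filter_le_eigval (hM : M.IsHermitian) {k : ℕ} (hk : k ≠ 0)
    (hkn : k ≤ Fintype.card n) : k ≤ #{i | hM.eigenvalues i ≤ eigval M k} := by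
  have hlen : k - 1 < (sortedEigs M).length := by
    rw [← Multiset.coe_card, coe_sortedEigs hM, Multiset.card_map, Finset.card_val,
      Finset.card_univ]
    omega
  rw [← countP_sortedEigs hM, eigval, List.getD_eq_getElem _ _ hlen]
  have := (sortedLE_sortedEigs M).succ_le_countP_le_getElem hlen
  omega

theorem dotProduct_eq_sum_eigenvectorBasis (hM : M.IsHermitian) (x y : n → ℝ) :
    x ⬝ᵥ y = ∑ i, (⇑(hM.eigenvectorBasis i) ⬝ᵥ x) * (⇑(hM.eigenvectorBasis i) ⬝ᵥ y) := by
  have := hM.eigenvectorBasis.sum_inner_mul_inner (WithLp.toLp 2 x) (WithLp.toLp 2 y)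
  simp only [EuclideanSpace.inner_eq_star_dotProduct, star_trivial] at this
  simpa [dotProduct_comm] using this.symm

theorem eigenvectorBasis_dotProduct_mulVec (hM : M.IsHermitian) (i : n) (x : n → ℝ) :
    ⇑(hM.eigenvectorBasis i) ⬝ᵥ (M *ᵥ x) =
      hM.eigenvalues i * (⇑(hM.eigenvectorBasis i) ⬝ᵥ x) := by
  have hMT : Mᵀ = M := by rw [← conjTranspose_eq_transpose_of_trivial, hM.eq]
  rw [dotProduct_mulVec, ← mulVec_transpose, hMT, mulVec_eigenvectorBasis, smul_dotProduct,
    smul_eq_mul]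

theorem dotProduct_mulVec_eq_sum (hM : M.IsHermitian) (x : n → ℝ) :
    x ⬝ᵥ (M *ᵥ x) = ∑ i, hM.eigenvalues i * (⇑(hM.eigenvectorBasis i) ⬝ᵥ x) ^ 2 := by
  simp only [hM.dotProduct_eq_sum_eigenvectorBasis x, eigenvectorBasis_dotProduct_mulVec]
  exact Finset.sum_congr rfl fun i _ => by ring

theorem dotProduct_self_eq_sum (hM : M.IsHermitian) (x : n → ℝ) :
    x ⬝ᵥ x = ∑ i, (⇑(hM.eigenvectorBasis i) ⬝ᵥ x) ^ 2 := by
  simp only [hM.dotProduct_eq_sum_eigenvectorBasis x x, sq]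

theorem eigenvectorBasis_dotProduct_eigenvectorBasis (hM : M.IsHermitian) {i j : n}
    (hij : i ≠ j) : ⇑(hM.eigenvectorBasis i) ⬝ᵥ ⇑(hM.eigenvectorBasis j) = 0 := by
  simpa [EuclideanSpace.inner_eq_star_dotProduct] using hM.eigenvectorBasis.orthonormal.2 hij.symm

theorem linearIndependent_eigenvectorBasis (hM : M.IsHermitian) :
    LinearIndependent ℝ fun i => ⇑(hM.eigenvectorBasis i) :=
  hM.eigenvectorBasis.orthonormal.linearIndependent.map'
    (WithLp.linearEquiv 2 ℝ (n → ℝ)).toLinearMap (WithLp.linearEquiv 2 ℝ (n → ℝ)).ker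

theorem eigval_le_of_rayleigh_le (hM : M.IsHermitian) {k : ℕ} (hk : k ≠ 0)
    {W : Submodule ℝ (n → ℝ)} (hW : k ≤ finrank ℝ W) {c : ℝ}
    (hc : ∀ x ∈ W, x ⬝ᵥ (M *ᵥ x) ≤ c * (x ⬝ᵥ x)) : eigval M k ≤ c := by
  refine hM.eigval_le_of_le_card_filter hk (not_lt.mp fun hlt => ?_)
  -- a nonzero `x ∈ W` orthogonal to every eigenvector with eigenvalue `≤ c` has Rayleigh
  -- quotient `> c`
  set J : Finset n := {i | hM.eigenvalues i ≤ c}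
  obtain ⟨x, hxW, hx0, hxJ⟩ := W.exists_mem_ne_zero_forall_dotProduct_eq_zero
    (fun i : J => ⇑(hM.eigenvectorBasis i)) (by rw [Fintype.card_coe]; omega)
  set β := fun i => ⇑(hM.eigenvectorBasis i) ⬝ᵥ x
  have hβ : ∀ i, hM.eigenvalues i ≤ c → β i = 0 := fun i hi => hxJ ⟨i, by simpa [J] using hi⟩
  obtain ⟨i, hi⟩ : ∃ i, β i ≠ 0 := by
    by_contra! h
    exact hx0 (dotProduct_self_eq_zero.mp (by simp [hM.dotProduct_self_eq_sum x, β, h]))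
  have hci : c < hM.eigenvalues i := not_le.mp fun h => hi (hβ i h)
  have hpos : 0 < ∑ j, (hM.eigenvalues j - c) * β j ^ 2 := by
    refine Finset.sum_pos' (fun j _ => ?_) ⟨i, mem_univ _, by nlinarith [sq_pos_of_ne_zero hi]⟩
    by_cases hj : hM.eigenvalues j ≤ c
    · simp [hβ j hj]
    · exact mul_nonneg (by linarith) (sq_nonneg _)
  have := hc x hxW
  rw [hM.dotProduct_mulVec_eq_sum, hM.dotProduct_self_eq_sum, Finset.mul_sum] at this
  simp only [sub_mul, Finset.sum_sub_distrib] at hpos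
  linarith

theorem exists_submodule_rayleigh_le_eigval (hM : M.IsHermitian) {k : ℕ} (hk : k ≠ 0)
    (hkn : k ≤ Fintype.card n) : ∃ W : Submodule ℝ (n → ℝ), k ≤ finrank ℝ W ∧
      ∀ x ∈ W, x ⬝ᵥ (M *ᵥ x) ≤ eigval M k * (x ⬝ᵥ x) := by
  set J : Finset n := {i | hM.eigenvalues i ≤ eigval M k}
  refine ⟨Submodule.span ℝ (Set.range fun i : J => ⇑(hM.eigenvectorBasis i)), ?_, fun x hx => ?_⟩
  · have hli := hM.linearIndependent_eigenvectorBasis.comp (Subtype.val : J → n)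
      Subtype.val_injective
    rw [Function.comp_def] at hli
    rw [finrank_span_eq_card hli, Fintype.card_coe]
    exact hM.le_card_filter_le_eigval hk hkn
  have hβ : ∀ j ∉ J, ⇑(hM.eigenvectorBasis j) ⬝ᵥ x = 0 := by
    intro j hj
    obtain ⟨a, rfl⟩ := (Submodule.mem_span_range_iff_exists_fun ℝ).mp hx
    simp only [dotProduct_sum, dotProduct_smul]
    exact Finset.sum_eq_zero fun i _ => by
      rw [hM.eigenvectorBasis_dotProduct_eigenvectorBasis (ne_of_mem_of_not_mem i.2 hj).symm,
        smul_zero]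
  rw [hM.dotProduct_mulVec_eq_sum, hM.dotProduct_self_eq_sum, Finset.mul_sum]
  refine Finset.sum_le_sum fun i _ => ?_
  by_cases hi : i ∈ J
  · exact mul_le_mul_of_nonneg_right (by simpa [J] using hi) (sq_nonneg _)
  · simp [hβ i hi]

end Matrix.IsHermitian

theorem Matrix.PosSemidef.eigval_nonneg (hM : M.PosSemidef) (k : ℕ) : 0 ≤ eigval M k := by
  rcases lt_or_ge (k - 1) (sortedEigs M).length with hk | hk
  · have hmem : (sortedEigs M)[k - 1] ∈ (sortedEigs M : Multiset ℝ) := List.getElem_mem hk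
    rw [hM.1.coe_sortedEigs, Multiset.mem_map] at hmem
    obtain ⟨i, -, hi⟩ := hmem
    rw [eigval, List.getD_eq_getElem _ _ hk, ← hi]
    exact hM.eigenvalues_nonneg i
  · rw [eigval, List.getD_eq_default _ _ hk]

end Spectrum

section Graph

variable {V : Type*} [Fintype V] [DecidableEq V] (G : SimpleGraph V)

theorem algConn_nonneg : 0 ≤ algConn G :=
  (G.posSemidef_lapMatrix ℝ).eigval_nonneg 2

theorem exists_sum_eq_zero_rayleigh_le_algConn (hV : 2 ≤ Fintype.card V) :
    ∃ f : V → ℝ, f ≠ 0 ∧ ∑ v, f v = 0 ∧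
      f ⬝ᵥ (G.lapMatrix ℝ *ᵥ f) ≤ algConn G * (f ⬝ᵥ f) := by
  obtain ⟨W, hW, hWM⟩ :=
    (G.isHermitian_lapMatrix ℝ).exists_submodule_rayleigh_le_eigval two_ne_zero hV
  obtain ⟨f, hfW, hf0, hf1⟩ :=
    W.exists_mem_ne_zero_forall_dotProduct_eq_zero (fun _ : Unit => 1) (by simp; omega)
  exact ⟨f, hf0, by simpa [one_dotProduct] using hf1 (), hWM f hfW⟩

theorem SimpleGraph.two_mul_sum_edgeFinset {R : Type*} [Semiring R] (g : Sym2 V → R) :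
    2 * ∑ e ∈ G.edgeFinset, g e = ∑ v, ∑ w, if G.Adj v w then g s(v, w) else 0 := by
  calc 2 * ∑ e ∈ G.edgeFinset, g e = ∑ d : G.Dart, g d.edge := by
        rw [Finset.mul_sum, ← Finset.sum_fiberwise_of_maps_to (g := SimpleGraph.Dart.edge)
          (t := G.edgeFinset) fun d _ => G.mem_edgeFinset.mpr d.edge_mem]
        refine Finset.sum_congr rfl fun e he => ?_
        rw [Finset.sum_congr rfl fun d hd => congrArg g (Finset.mem_filter.mp hd).2,
          Finset.sum_const, G.dart_edge_fiber_card e (G.mem_edgeFinset.mp he), nsmul_eq_mul,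
          Nat.cast_two]
    _ = ∑ vw : V × V, if G.Adj vw.1 vw.2 then g s(vw.1, vw.2) else 0 := by
        rw [← Finset.sum_filter]
        exact Finset.sum_bij' (fun d _ => d.toProd) (fun vw h => ⟨vw, (mem_filter.1 h).2⟩)
          (by simp) (by simp) (by simp) (by simp) (fun d _ => rfl)
    _ = _ := Fintype.sum_prod_type _

end Graph

section Framework

variable {V : Type*} {d : ℕ} {G : SimpleGraph V} {p : V → Fin d → ℝ}

theorem IsLinfPos.exists_mono_adj_iff (hp : IsLinfPos G p) {a b : V} (hab : G.Adj a b) :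
    ∃ i, p a i ≠ p b i ∧ ∀ j, (mono G p j).Adj a b ↔ j = i := by
  obtain ⟨hne, i, hi⟩ := hp hab
  refine ⟨i, fun heq => hne (funext fun j => ?_), fun j => ⟨fun hj => ?_, ?_⟩⟩
  · by_contra hj
    have := hi j (fun hji => hj (hji ▸ heq))
    rw [heq, sub_self, abs_zero] at this
    exact (abs_nonneg _).not_gt this
  · by_contra hji
    exact (hi j hji).not_ge (hj.2 i)
  · rintro rfl
    exact ⟨hab, fun k => (eq_or_ne k j).elim (fun hk => hk ▸ le_rfl) fun hk => (hi k hk).le⟩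

variable [DecidableEq V]

theorem rigidity_apply_of_notMem {e : G.edgeSet} {v : V} (hv : v ∉ (e : Sym2 V)) (j : Fin d) :
    rigidity G p e (v, j) = 0 :=
  dif_neg hv

theorem rigidity_mk_apply_left {v w : V} (h : s(v, w) ∈ G.edgeSet) (j : Fin d) :
    rigidity G p ⟨s(v, w), h⟩ (v, j) =
      if (mono G p j).Adj v w then Real.sign (p v j - p w j) else 0 := by
  have hv : v ∈ s(v, w) := Sym2.mem_mk_left v w
  have hother : Sym2.Mem.other hv = w := Sym2.congr_right.mp (Sym2.other_spec hv)
  simp only [rigidity, dif_pos hv, hother]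

theorem rigidity_mk_apply_right {v w : V} (h : s(v, w) ∈ G.edgeSet) (j : Fin d) :
    rigidity G p ⟨s(v, w), h⟩ (w, j) =
      if (mono G p j).Adj v w then -Real.sign (p v j - p w j) else 0 := by
  have h' : s(w, v) ∈ G.edgeSet := Sym2.eq_swap ▸ h
  rw [show (⟨s(v, w), h⟩ : G.edgeSet) = ⟨s(w, v), h'⟩ from Subtype.ext Sym2.eq_swap,
    rigidity_mk_apply_left, (mono G p j).adj_comm, ← Real.sign_neg, neg_sub]

variable [Fintype V]

theorem rigidity_mulVec_mk {a b : V} (h : s(a, b) ∈ G.edgeSet) (x : V × Fin d → ℝ) :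
    (rigidity G p *ᵥ x) ⟨s(a, b), h⟩ = ∑ j, if (mono G p j).Adj a b then
      Real.sign (p a j - p b j) * (x (a, j) - x (b, j)) else 0 := by
  have hab : a ≠ b := G.ne_of_adj (G.mem_edgeSet.mp h)
  rw [mulVec, dotProduct, Fintype.sum_prod_type, Finset.sum_comm]
  refine Finset.sum_congr rfl fun j _ => ?_
  rw [Fintype.sum_eq_add a b hab fun v hv => by
    rw [rigidity_apply_of_notMem (by simpa [not_or] using hv), zero_mul],
    rigidity_mk_apply_left, rigidity_mk_apply_right]
  split_ifs <;> ring

theorem dotProduct_fLap_mulVec (x : V × Fin d → ℝ) :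
    x ⬝ᵥ (fLap G p *ᵥ x) = ∑ e, (rigidity G p *ᵥ x) e ^ 2 := by
  rw [fLap, ← mulVec_mulVec, dotProduct_mulVec, vecMul_transpose]
  simp only [dotProduct, sq]

theorem IsLinfPos.rigidity_mulVec_mk_sq (hp : IsLinfPos G p) {a b : V}
    (h : s(a, b) ∈ G.edgeSet) (c : Fin d → ℝ) (y : V → ℝ) :
    (rigidity G p *ᵥ fun vj => c vj.2 + y vj.1) ⟨s(a, b), h⟩ ^ 2 = (y a - y b) ^ 2 := by
  obtain ⟨i, hi, hmono⟩ := hp.exists_mono_adj_iff (G.mem_edgeSet.mp h)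
  simp only [rigidity_mulVec_mk, hmono, Finset.sum_ite_eq', Finset.mem_univ, if_true]
  rcases Real.sign_apply_eq_of_ne_zero _ (sub_ne_zero.mpr hi) with hs | hs <;>
    rw [hs] <;> ring

theorem IsLinfPos.dotProduct_fLap_mulVec_translate_add (hp : IsLinfPos G p) (c : Fin d → ℝ)
    (y : V → ℝ) :
    (fun vj => c vj.2 + y vj.1) ⬝ᵥ (fLap G p *ᵥ fun vj => c vj.2 + y vj.1) =
      y ⬝ᵥ (G.lapMatrix ℝ *ᵥ y) := by
  let g : Sym2 V → ℝ := Sym2.lift ⟨fun a b => (y a - y b) ^ 2, fun a b => by ring⟩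
  have hedge : ∀ e : G.edgeSet, (rigidity G p *ᵥ fun vj => c vj.2 + y vj.1) e ^ 2 = g e := by
    rintro ⟨e, he⟩
    induction e using Sym2.ind with
    | _ a b => exact hp.rigidity_mulVec_mk_sq he c y
  have h2 := G.two_mul_sum_edgeFinset g
  have hL := G.lapMatrix_toLinearMap₂' ℝ y
  rw [toLinearMap₂'_apply'] at hL
  simp only [g, Sym2.lift_mk] at h2
  rw [dotProduct_fLap_mulVec, Fintype.sum_congr _ _ hedge,
    ← Finset.sum_subtype G.edgeFinset (fun e => G.mem_edgeFinset) g, hL]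
  linarith

end Framework

section TranslateStretch

variable {V : Type*} {d : ℕ}

def translateStretch (f : V → ℝ) : (Fin d → ℝ) × ℝ →ₗ[ℝ] V × Fin d → ℝ :=
  (LinearMap.funLeft ℝ ℝ Prod.snd).coprod (LinearMap.toSpanSingleton ℝ _ (f ∘ Prod.fst))

theorem translateStretch_apply (f : V → ℝ) (c : Fin d → ℝ) (A : ℝ) :
    translateStretch f (c, A) = fun vj => c vj.2 + (A • f) vj.1 :=
  rfl

variable [Fintype V]

theorem translateStretch_injective (hd : 0 < d) {f : V → ℝ} (hf : f ≠ 0)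
    (hsum : ∑ v, f v = 0) : Function.Injective (translateStretch (d := d) f) := by
  rw [← LinearMap.ker_eq_bot, LinearMap.ker_eq_bot']
  rintro ⟨c, A⟩ h
  have hx : ∀ v j, c j + A * f v = 0 := fun v j => by
    simpa [translateStretch_apply] using congrFun h (v, j)
  obtain ⟨v₀, hv₀⟩ := Function.ne_iff.mp hf
  have : Nonempty V := ⟨v₀⟩
  have hc₀ : c ⟨0, hd⟩ = 0 := by
    have := Finset.sum_eq_zero fun v (_ : v ∈ univ) => hx v ⟨0, hd⟩
    rw [Finset.sum_add_distrib, ← Finset.mul_sum, hsum, Finset.sum_const, card_univ] at this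
    simpa [Fintype.card_ne_zero] using this
  have hA : A = 0 := (mul_eq_zero.mp (by simpa [hc₀] using hx v₀ ⟨0, hd⟩)).resolve_right hv₀
  ext j
  · simpa [hA] using hx v₀ j
  · exact hA

theorem finrank_range_translateStretch (hd : 0 < d) {f : V → ℝ} (hf : f ≠ 0)
    (hsum : ∑ v, f v = 0) :
    finrank ℝ (LinearMap.range (translateStretch (d := d) f)) = d + 1 := by
  rw [LinearMap.finrank_range_of_inj (translateStretch_injective hd hf hsum),
    Module.finrank_prod, Module.finrank_fin_fun, Module.finrank_self]

theorem dotProduct_self_translate_add (c : Fin d → ℝ) {y : V → ℝ} (hy : ∑ v, y v = 0) :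
    (fun vj : V × Fin d => c vj.2 + y vj.1) ⬝ᵥ (fun vj => c vj.2 + y vj.1) =
      Fintype.card V * (c ⬝ᵥ c) + d * (y ⬝ᵥ y) := by
  simp only [dotProduct, Fintype.sum_prod_type, add_mul_self_eq, Finset.sum_add_distrib]
  rw [Finset.sum_comm]
  simp [← Finset.sum_mul, mul_assoc, ← Finset.mul_sum, hy]

theorem IsLinfPos.rayleigh_translateStretch_le [DecidableEq V] {G : SimpleGraph V}
    {p : V → Fin d → ℝ} (hp : IsLinfPos G p) (hd : 0 < d) {f : V → ℝ} (hsum : ∑ v, f v = 0)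
    {a : ℝ} (ha : 0 ≤ a) (hf : f ⬝ᵥ (G.lapMatrix ℝ *ᵥ f) ≤ a * (f ⬝ᵥ f))
    (c : Fin d → ℝ) (A : ℝ) :
    translateStretch f (c, A) ⬝ᵥ (fLap G p *ᵥ translateStretch f (c, A)) ≤
      a / d * (translateStretch f (c, A) ⬝ᵥ translateStretch f (c, A)) := by
  have hsum' : ∑ v, (A • f) v = 0 := by simp [← Finset.mul_sum, hsum]
  rw [translateStretch_apply, hp.dotProduct_fLap_mulVec_translate_add,
    dotProduct_self_translate_add c hsum']
  calc A • f ⬝ᵥ (G.lapMatrix ℝ *ᵥ A • f) = A ^ 2 * (f ⬝ᵥ (G.lapMatrix ℝ *ᵥ f)) := by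
        simp only [mulVec_smul, dotProduct_smul, smul_dotProduct, smul_eq_mul]; ring
    _ ≤ A ^ 2 * (a * (f ⬝ᵥ f)) := by gcongr
    _ = a / d * (d * (A • f ⬝ᵥ A • f)) := by
        simp only [dotProduct_smul, smul_dotProduct, smul_eq_mul]; field_simp
    _ ≤ a / d * (Fintype.card V * (c ⬝ᵥ c) + d * (A • f ⬝ᵥ A • f)) := by
        gcongr
        exact le_add_of_nonneg_left (mul_nonneg (Nat.cast_nonneg _) (dotProduct_self_star_nonneg c))

end TranslateStretch

/-- For `d ≥ 2` and a finite simple graph `G` with at least `d+1` vertices,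
`a(G, ℓ∞^d) ≤ a(G)/d`, where `a(G)` is the algebraic connectivity (Fiedler number). -/
theorem algConnLinf_le_algConn_div {V : Type*} [Fintype V] [DecidableEq V] {d : ℕ}
    (hd : 2 ≤ d) (G : SimpleGraph V) (hV : d + 1 ≤ Fintype.card V) :
    algConnLinf d G ≤ algConn G / d := by
  obtain ⟨f, hf₀, hsum, hf⟩ := exists_sum_eq_zero_rayleigh_le_algConn G (by omega)
  refine Real.sSup_le ?_ (div_nonneg (algConn_nonneg G) d.cast_nonneg)
  rintro _ ⟨p, hp, rfl⟩
  have hL : (fLap G p).IsHermitian := by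
    simpa [fLap] using isHermitian_conjTranspose_mul_self (rigidity G p)
  refine hL.eigval_le_of_rayleigh_le d.succ_ne_zero
    (finrank_range_translateStretch (by omega) hf₀ hsum).ge ?_
  rintro _ ⟨⟨c, A⟩, rfl⟩
  exact hp.rayleigh_translateStretch_le (by omega) hsum (algConn_nonneg G) hf c A
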